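/- In the cut-vertex setup, let μ be a weight on F. Then for every x ∈ V(G) and y ∈ V(H): P_{F,μ}(x ∼_F y) = P_{G,μ}(x ∼_G v⁻)·P_{H₀,μ}(v⁻ ∼_{H₀} y) + P_{G,μ}(x ∼_G v⁺)·P_{H₀,μ}(v⁺ ∼_{H₀} y) − P_{G,μ}((x ∼_G v⁻) ∩ (x ∼_G v⁺))·P_{H₀,μ}((v⁻ ∼_{H₀} y) ∩ (v⁺ ∼_{H₀} y)). -/

import Mathlib

open Classical

noncomputable def edgeFin {V : Type*} [Fintype V] (G : SimpleGraph V) : Finset (Sym2 V) :=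
  G.edgeSet.toFinset

noncomputable def percWeight {V : Type*} [Fintype V] (G : SimpleGraph V)
    (μ : Sym2 V → ℝ) (K : Finset (Sym2 V)) : ℝ :=
  (∏ e ∈ K, μ e) * ∏ e ∈ edgeFin G \ K, (1 - μ e)

noncomputable def percProb {V : Type*} [Fintype V] (G : SimpleGraph V)
    (μ : Sym2 V → ℝ) (A : Finset (Sym2 V) → Prop) : ℝ :=
  ∑ K ∈ (edgeFin G).powerset, if A K then percWeight G μ K else 0

def ConnIn {V : Type*} (K : Finset (Sym2 V)) (x y : V) : Prop :=
  (SimpleGraph.fromEdgeSet (↑K : Set (Sym2 V))).Reachable x y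

def IsWeight {V : Type*} (G : SimpleGraph V) (μ : Sym2 V → ℝ) : Prop :=
  ∀ e ∈ G.edgeSet, 0 ≤ μ e ∧ μ e ≤ 1

def BB {V : Type*} (G : SimpleGraph V) : SimpleGraph (V × Bool) :=
  G.boxProd ⊤

def IsSymWeight {V : Type*} (G : SimpleGraph V) (μ : Sym2 (V × Bool) → ℝ) : Prop :=
  ∀ x y : V, G.Adj x y →
    μ s((x, false), (y, false)) = μ s((x, true), (y, true))

def SatisfiesBunkbed {V : Type*} [Fintype V] (G : SimpleGraph V) : Prop :=
  ∀ μ : Sym2 (V × Bool) → ℝ, IsWeight (BB G) μ → IsSymWeight G μ →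
    ∀ x y : V,
      percProb (BB G) μ (fun K => ConnIn K (x, false) (y, true)) ≤
        percProb (BB G) μ (fun K => ConnIn K (x, false) (y, false))

def restrict {V : Type*} (G : SimpleGraph V) (S : Set V) : SimpleGraph V where
  Adj x y := G.Adj x y ∧ x ∈ S ∧ y ∈ S
  symm := ⟨fun x y h => ⟨h.1.symm, h.2.2, h.2.1⟩⟩
  loopless := ⟨fun x h => G.loopless.irrefl x h.1⟩

def IsCutVertex {V : Type*} (G : SimpleGraph V) (v : V) : Prop :=
  ∃ x y : ({u | u ≠ v} : Set V),
    G.Reachable x.1 y.1 ∧ ¬ (G.induce {u | u ≠ v}).Reachable x y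

/-- The copy of `BB (F̄[S])` sitting inside `BB F̄` (as a spanning subgraph on `V × Bool`):
its edges are the two horizontal copies of the edges of `F̄` inside `S`, together with the
vertical edges at the vertices of `S`. -/
def bbSide {V : Type*} (Fbar : SimpleGraph V) (S : Set V) : SimpleGraph (V × Bool) :=
  restrict (BB Fbar) {p : V × Bool | p.1 ∈ S}

/-- `H₀`: the graph `H = BB (F̄[T])` with the vertical edge `v⁻v⁺` deleted. -/
def bbSideDel {V : Type*} (Fbar : SimpleGraph V) (T : Set V) (v : V) :
    SimpleGraph (V × Bool) :=
  (bbSide Fbar T).deleteEdges {s((v, false), (v, true))}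

/- ================= auxiliary lemmas ================= -/

lemma mem_edgeFin {V : Type*} [Fintype V] {G : SimpleGraph V} {e : Sym2 V} :
    e ∈ edgeFin G ↔ e ∈ G.edgeSet := Set.mem_toFinset

lemma bbSide_adj {V : Type*} {Fbar : SimpleGraph V} {S : Set V} {p q : V × Bool} :
    (bbSide Fbar S).Adj p q ↔ (BB Fbar).Adj p q ∧ p.1 ∈ S ∧ q.1 ∈ S := Iff.rfl

lemma bbSideDel_adj {V : Type*} {Fbar : SimpleGraph V} {T : Set V} {v : V} {p q : V × Bool} :
    (bbSideDel Fbar T v).Adj p q ↔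
      ((BB Fbar).Adj p q ∧ p.1 ∈ T ∧ q.1 ∈ T) ∧
        s(p, q) ∉ ({s((v, false), (v, true))} : Set (Sym2 (V × Bool))) := by
  rw [bbSideDel, SimpleGraph.deleteEdges_adj, bbSide_adj]

lemma adj_split {V : Type*} {Fbar : SimpleGraph V} {v : V} {S T : Set V}
    (hST : S ∩ T = {v}) (hUnion : S ∪ T = Set.univ)
    (hSep : ∀ x ∈ S, ∀ y ∈ T, Fbar.Adj x y → x = v ∨ y = v)
    {p q : V × Bool} (h : (BB Fbar).Adj p q) :
    (bbSide Fbar S).Adj p q ∨ (bbSideDel Fbar T v).Adj p q := by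
  have hv : v ∈ S ∩ T := by rw [hST]; exact rfl
  have hmem : ∀ a : V, a ∉ S → a ∈ T := by
    intro a ha
    have : a ∈ S ∪ T := hUnion ▸ Set.mem_univ a
    exact this.resolve_left ha
  have hne1 : p.1 ≠ q.1 → s(p, q) ∉ ({s((v, false), (v, true))} : Set (Sym2 (V × Bool))) := by
    intro hne hmem'
    simp only [Set.mem_singleton_iff, Sym2.eq_iff] at hmem'
    rcases hmem' with ⟨h1, h2⟩ | ⟨h1, h2⟩ <;>
      exact hne (by rw [h1, h2])
  have hne2 : p.1 ≠ v → s(p, q) ∉ ({s((v, false), (v, true))} : Set (Sym2 (V × Bool))) := by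
    intro hne hmem'
    simp only [Set.mem_singleton_iff, Sym2.eq_iff] at hmem'
    rcases hmem' with ⟨h1, h2⟩ | ⟨h1, h2⟩ <;> exact hne (by rw [h1])
  rcases SimpleGraph.boxProd_adj.1 h with ⟨hadj, _⟩ | ⟨_, heq⟩
  · -- horizontal edge
    have hpq : p.1 ≠ q.1 := hadj.ne
    by_cases hp : p.1 ∈ S <;> by_cases hq : q.1 ∈ S
    · exact Or.inl ⟨h, hp, hq⟩
    · -- p ∈ S, q ∉ S, so q ∈ T
      have hqT := hmem _ hq
      rcases hSep _ hp _ hqT hadj with h1 | h1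
      · exact Or.inr (bbSideDel_adj.2 ⟨⟨h, h1 ▸ hv.2, hqT⟩, hne1 hpq⟩)
      · exact absurd (h1 ▸ hv.1) hq
    · have hpT := hmem _ hp
      rcases hSep _ hq _ hpT hadj.symm with h1 | h1
      · exact Or.inr (bbSideDel_adj.2 ⟨⟨h, hpT, h1 ▸ hv.2⟩, hne1 hpq⟩)
      · exact absurd (h1 ▸ hv.1) hp
    · exact Or.inr (bbSideDel_adj.2 ⟨⟨h, hmem _ hp, hmem _ hq⟩, hne1 hpq⟩)
  · -- vertical edge
    by_cases hp : p.1 ∈ S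
    · exact Or.inl ⟨h, hp, show q.1 ∈ S from heq ▸ hp⟩
    · have hpT := hmem _ hp
      have hpv : p.1 ≠ v := fun hh => hp (hh ▸ hv.1)
      exact Or.inr (bbSideDel_adj.2 ⟨⟨h, hpT, show q.1 ∈ T from heq ▸ hpT⟩, hne2 hpv⟩)

lemma edge_split {V : Type*} [Fintype V] {Fbar : SimpleGraph V} {v : V} {S T : Set V}
    (hST : S ∩ T = {v}) (hUnion : S ∪ T = Set.univ)
    (hSep : ∀ x ∈ S, ∀ y ∈ T, Fbar.Adj x y → x = v ∨ y = v) :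
    edgeFin (BB Fbar) = edgeFin (bbSide Fbar S) ∪ edgeFin (bbSideDel Fbar T v) := by
  ext e
  induction e with
  | _ p q =>
    simp only [Finset.mem_union, mem_edgeFin, SimpleGraph.mem_edgeSet]
    constructor
    · intro h
      exact adj_split hST hUnion hSep h
    · rintro (h | h)
      · exact h.1
      · exact (bbSideDel_adj.1 h).1.1

lemma edge_disjoint {V : Type*} [Fintype V] {Fbar : SimpleGraph V} {v : V} {S T : Set V}
    (hST : S ∩ T = {v}) :
    Disjoint (edgeFin (bbSide Fbar S)) (edgeFin (bbSideDel Fbar T v)) := by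
  rw [Finset.disjoint_left]
  intro e he1 he2
  induction e with
  | _ p q =>
    rw [mem_edgeFin, SimpleGraph.mem_edgeSet] at he1 he2
    rcases he1 with ⟨hadj, hpS, hqS⟩
    rcases bbSideDel_adj.1 he2 with ⟨⟨_, hpT, hqT⟩, hnv⟩
    have hpv : p.1 = v := by
      have : p.1 ∈ S ∩ T := ⟨hpS, hpT⟩
      rwa [hST] at this
    have hqv : q.1 = v := by
      have : q.1 ∈ S ∩ T := ⟨hqS, hqT⟩
      rwa [hST] at this
    -- the edge must be the vertical edge at v
    rcases SimpleGraph.boxProd_adj.1 hadj with ⟨hF, _⟩ | ⟨htop, _⟩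
    · exact hF.ne (hpv.trans hqv.symm)
    · have hne : p.2 ≠ q.2 := htop.ne
      apply hnv
      simp only [Set.mem_singleton_iff, Sym2.eq_iff]
      have hp : p = (v, p.2) := Prod.ext hpv rfl
      have hq : q = (v, q.2) := Prod.ext hqv rfl
      cases hb : p.2 <;> cases hb' : q.2
      · exact absurd (hb.trans hb'.symm) hne
      · left; exact ⟨by rw [hp, hb], by rw [hq, hb']⟩
      · right; exact ⟨by rw [hp, hb], by rw [hq, hb']⟩
      · exact absurd (hb.trans hb'.symm) hne

lemma conn_split {V : Type*} [Fintype V] {Fbar : SimpleGraph V} {v : V} {S T : Set V}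
    (hST : S ∩ T = {v}) (hUnion : S ∪ T = Set.univ)
    (hSep : ∀ x ∈ S, ∀ y ∈ T, Fbar.Adj x y → x = v ∨ y = v)
    (K : Finset (Sym2 (V × Bool))) (hK : K ⊆ edgeFin (BB Fbar))
    {x y : V × Bool} (hx : x.1 ∈ S) (hy : y.1 ∈ T) :
    ConnIn K x y ↔
      ∃ b, ConnIn (K ∩ edgeFin (bbSide Fbar S)) x (v, b) ∧
        ConnIn (K ∩ edgeFin (bbSideDel Fbar T v)) (v, b) y := by
  classical
  set EG := edgeFin (bbSide Fbar S) with hEG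
  set EH := edgeFin (bbSideDel Fbar T v) with hEH
  set G' := SimpleGraph.fromEdgeSet (↑(K ∩ EG) : Set (Sym2 (V × Bool))) with hG'
  set H' := SimpleGraph.fromEdgeSet (↑(K ∩ EH) : Set (Sym2 (V × Bool))) with hH'
  have hv : v ∈ S ∩ T := by rw [hST]; exact rfl
  have hvertex : ∀ a : V, a ∈ S → a ∈ T → a = v := by
    intro a h1 h2
    have : a ∈ S ∩ T := ⟨h1, h2⟩
    rwa [hST] at this
  -- the helper: T-clause at a gateway vertex implies S-clause there
  have helperT : ∀ c : Bool,
      (H'.Reachable (v, c) y ∨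
        ∃ b b', H'.Reachable (v, c) (v, b) ∧ G'.Reachable (v, b) (v, b') ∧
          H'.Reachable (v, b') y) →
      ∃ b₀, G'.Reachable (v, c) (v, b₀) ∧ H'.Reachable (v, b₀) y := by
    intro c h
    rcases h with h | ⟨b, b', h1, h2, h3⟩
    · exact ⟨c, SimpleGraph.Reachable.refl _, h⟩
    · by_cases hcb : c = b
      · subst hcb; exact ⟨b', h2, h3⟩
      · by_cases hb' : b' = c
        · rw [hb'] at h3; exact ⟨c, SimpleGraph.Reachable.refl _, h3⟩
        · have hbb : b' = b := by
            revert hcb hb'; cases b <;> cases c <;> cases b' <;> decide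
          subst hbb
          exact ⟨c, SimpleGraph.Reachable.refl _, h1.trans h3⟩
  constructor
  · rintro ⟨w⟩
    have key : ∀ z u : V × Bool,
        (SimpleGraph.fromEdgeSet (↑K : Set (Sym2 (V × Bool)))).Walk z u → u = y →
        (z.1 ∈ S ∧ ∃ b, G'.Reachable z (v, b) ∧ H'.Reachable (v, b) y) ∨
        (z.1 ∈ T ∧ (H'.Reachable z y ∨
          ∃ b b', H'.Reachable z (v, b) ∧ G'.Reachable (v, b) (v, b') ∧
            H'.Reachable (v, b') y)) := by
      intro z u w
      induction w with
      | nil =>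
        rintro rfl
        exact Or.inr ⟨hy, Or.inl (SimpleGraph.Reachable.refl _)⟩
      | @cons z w' _ a p ih0 =>
        intro hu
        have ih := ih0 hu
        rw [SimpleGraph.fromEdgeSet_adj] at a
        obtain ⟨hmemK, hzw⟩ := a
        have hmemK' : s(z, w') ∈ K := hmemK
        have hsplit : s(z, w') ∈ EG ∨ s(z, w') ∈ EH := by
          have := hK hmemK'
          rw [edge_split hST hUnion hSep, Finset.mem_union] at this
          exact this
        rcases hsplit with hG | hH
        · -- edge in the S side
          have haG : G'.Adj z w' := by
            rw [hG', SimpleGraph.fromEdgeSet_adj]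
            exact ⟨Finset.mem_coe.2 (Finset.mem_inter.2 ⟨hmemK', hG⟩), hzw⟩
          have hend : z.1 ∈ S ∧ w'.1 ∈ S := by
            have := mem_edgeFin.1 hG
            rw [SimpleGraph.mem_edgeSet] at this
            exact ⟨this.2.1, this.2.2⟩
          rcases ih with ⟨_, b, hGr, hHr⟩ | ⟨hwT, hrest⟩
          · exact Or.inl ⟨hend.1, b, haG.reachable.trans hGr, hHr⟩
          · have hwv : w'.1 = v := hvertex _ hend.2 hwT
            have hw' : w' = (v, w'.2) := Prod.ext hwv rfl
            rw [hw'] at hrest haG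
            obtain ⟨b₀, hG0, hH0⟩ := helperT w'.2 hrest
            exact Or.inl ⟨hend.1, b₀, haG.reachable.trans hG0, hH0⟩
        · -- edge in the T side
          have haH : H'.Adj z w' := by
            rw [hH', SimpleGraph.fromEdgeSet_adj]
            exact ⟨Finset.mem_coe.2 (Finset.mem_inter.2 ⟨hmemK', hH⟩), hzw⟩
          have hend : z.1 ∈ T ∧ w'.1 ∈ T := by
            have := mem_edgeFin.1 hH
            rw [SimpleGraph.mem_edgeSet] at this
            rcases bbSideDel_adj.1 this with ⟨⟨_, h1, h2⟩, _⟩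
            exact ⟨h1, h2⟩
          rcases ih with ⟨hwS, b, hGr, hHr⟩ | ⟨_, hrest⟩
          · have hwv : w'.1 = v := hvertex _ hwS hend.2
            have hw' : w' = (v, w'.2) := Prod.ext hwv rfl
            rw [hw'] at hGr haH
            exact Or.inr ⟨hend.1, Or.inr ⟨w'.2, b, haH.reachable, hGr, hHr⟩⟩
          · rcases hrest with h | ⟨b, b', h1, h2, h3⟩
            · exact Or.inr ⟨hend.1, Or.inl (haH.reachable.trans h)⟩
            · exact Or.inr ⟨hend.1, Or.inr ⟨b, b', haH.reachable.trans h1, h2, h3⟩⟩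
    rcases key x y w rfl with ⟨_, b, hGr, hHr⟩ | ⟨hxT, hrest⟩
    · exact ⟨b, hGr, hHr⟩
    · have hxv : x.1 = v := hvertex _ hx hxT
      have hx' : x = (v, x.2) := Prod.ext hxv rfl
      rw [hx'] at hrest ⊢
      exact helperT x.2 hrest
  · rintro ⟨b, h1, h2⟩
    have m1 : G' ≤ SimpleGraph.fromEdgeSet (↑K : Set (Sym2 (V × Bool))) :=
      SimpleGraph.fromEdgeSet_mono (by exact_mod_cast Finset.inter_subset_left)
    have m2 : H' ≤ SimpleGraph.fromEdgeSet (↑K : Set (Sym2 (V × Bool))) :=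
      SimpleGraph.fromEdgeSet_mono (by exact_mod_cast Finset.inter_subset_left)
    exact (h1.mono m1).trans (h2.mono m2)

lemma sum_powerset_union {α : Type*} [DecidableEq α] {A B : Finset α} (h : Disjoint A B)
    (f : Finset α → ℝ) :
    ∑ K ∈ (A ∪ B).powerset, f K = ∑ K₁ ∈ A.powerset, ∑ K₂ ∈ B.powerset, f (K₁ ∪ K₂) := by
  have main : ∑ K ∈ (A ∪ B).powerset, f K
      = ∑ p ∈ A.powerset ×ˢ B.powerset, f (p.1 ∪ p.2) := by
    refine Finset.sum_bij' (fun K _ => (K ∩ A, K ∩ B)) (fun p _ => p.1 ∪ p.2) ?_ ?_ ?_ ?_ ?_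
    · intro K hK
      exact Finset.mem_product.2 ⟨Finset.mem_powerset.2 Finset.inter_subset_right,
        Finset.mem_powerset.2 Finset.inter_subset_right⟩
    · intro p hp
      rcases Finset.mem_product.1 hp with ⟨h1, h2⟩
      exact Finset.mem_powerset.2
        (Finset.union_subset
          ((Finset.mem_powerset.1 h1).trans Finset.subset_union_left)
          ((Finset.mem_powerset.1 h2).trans Finset.subset_union_right))
    · intro K hK
      show K ∩ A ∪ K ∩ B = K
      rw [← Finset.inter_union_distrib_left,
        Finset.inter_eq_left.2 (Finset.mem_powerset.1 hK)]
    · intro p hp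
      rcases Finset.mem_product.1 hp with ⟨h1, h2⟩
      have h1' := Finset.mem_powerset.1 h1
      have h2' := Finset.mem_powerset.1 h2
      have e1 : (p.1 ∪ p.2) ∩ A = p.1 := by
        rw [Finset.union_inter_distrib_right, Finset.inter_eq_left.2 h1',
          Finset.disjoint_iff_inter_eq_empty.1 ((h.symm.mono_left h2')), Finset.union_empty]
      have e2 : (p.1 ∪ p.2) ∩ B = p.2 := by
        rw [Finset.union_inter_distrib_right, Finset.inter_eq_left.2 h2',
          Finset.disjoint_iff_inter_eq_empty.1 ((h.mono_left h1')), Finset.empty_union]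
      show ((p.1 ∪ p.2) ∩ A, (p.1 ∪ p.2) ∩ B) = p
      rw [e1, e2]
    · intro K hK
      show f K = f (K ∩ A ∪ K ∩ B)
      rw [← Finset.inter_union_distrib_left,
        Finset.inter_eq_left.2 (Finset.mem_powerset.1 hK)]
  rw [main, Finset.sum_product]

lemma percWeight_eq {V : Type*} [Fintype V] (G : SimpleGraph V) (μ : Sym2 V → ℝ)
    (K L : Finset (Sym2 V)) (hL : ∀ e, e ∈ L ↔ (e ∈ edgeFin G ∧ e ∉ K)) :
    percWeight G μ K = (∏ e ∈ K, μ e) * ∏ e ∈ L, (1 - μ e) := by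
  unfold percWeight
  have h : edgeFin G \ K = L := by
    ext e
    rw [Finset.mem_sdiff, hL]
  rw [h]

lemma percWeight_factor {V : Type*} [Fintype V] {Fbar : SimpleGraph V} {v : V} {S T : Set V}
    (hST : S ∩ T = {v}) (hUnion : S ∪ T = Set.univ)
    (hSep : ∀ x ∈ S, ∀ y ∈ T, Fbar.Adj x y → x = v ∨ y = v)
    (μ : Sym2 (V × Bool) → ℝ)
    {K₁ K₂ : Finset (Sym2 (V × Bool))}
    (h1 : K₁ ⊆ edgeFin (bbSide Fbar S)) (h2 : K₂ ⊆ edgeFin (bbSideDel Fbar T v)) :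
    percWeight (BB Fbar) μ (K₁ ∪ K₂) =
      percWeight (bbSide Fbar S) μ K₁ * percWeight (bbSideDel Fbar T v) μ K₂ := by
  set EG := edgeFin (bbSide Fbar S)
  set EH := edgeFin (bbSideDel Fbar T v)
  have hdisj : Disjoint EG EH := edge_disjoint hST
  have hd12 : Disjoint K₁ K₂ := hdisj.mono h1 h2
  have hGK2 : ∀ e, e ∈ EG → e ∉ K₂ := fun e h hh => (Finset.disjoint_left.1 hdisj) h (h2 hh)
  have hHK1 : ∀ e, e ∈ EH → e ∉ K₁ :=
    fun e h hh => (Finset.disjoint_left.1 hdisj.symm) h (h1 hh)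
  have hA : ∀ e, e ∈ (EG \ K₁) ∪ (EH \ K₂) ↔ (e ∈ edgeFin (BB Fbar) ∧ e ∉ K₁ ∪ K₂) := by
    intro e
    rw [edge_split hST hUnion hSep]
    simp only [Finset.mem_sdiff, Finset.mem_union]
    constructor
    · rintro (⟨h, h'⟩ | ⟨h, h'⟩)
      · exact ⟨Or.inl h, by simp [h', hGK2 e h]⟩
      · exact ⟨Or.inr h, by simp [h', hHK1 e h]⟩
    · rintro ⟨h | h, h'⟩
      · exact Or.inl ⟨h, fun hh => h' (Or.inl hh)⟩
      · exact Or.inr ⟨h, fun hh => h' (Or.inr hh)⟩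
  have hB : ∀ e, e ∈ EG \ K₁ ↔ (e ∈ edgeFin (bbSide Fbar S) ∧ e ∉ K₁) := by
    intro e; rw [Finset.mem_sdiff]
  have hC : ∀ e, e ∈ EH \ K₂ ↔ (e ∈ edgeFin (bbSideDel Fbar T v) ∧ e ∉ K₂) := by
    intro e; rw [Finset.mem_sdiff]
  rw [percWeight_eq (BB Fbar) μ (K₁ ∪ K₂) ((EG \ K₁) ∪ (EH \ K₂)) hA,
    percWeight_eq (bbSide Fbar S) μ K₁ (EG \ K₁) hB,
    percWeight_eq (bbSideDel Fbar T v) μ K₂ (EH \ K₂) hC,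
    Finset.prod_union hd12,
    Finset.prod_union (hdisj.mono Finset.sdiff_subset Finset.sdiff_subset)]
  ring


/-- Splitting the connection probability across the two sides of the cut vertex. -/
theorem conn_prob_split {V : Type*} [Fintype V]
    (Fbar : SimpleGraph V) (v : V) (S T : Set V)
    (hcut : IsCutVertex Fbar v)
    (hST : S ∩ T = {v}) (hUnion : S ∪ T = Set.univ)
    (hSep : ∀ x ∈ S, ∀ y ∈ T, Fbar.Adj x y → x = v ∨ y = v)
    (μ : Sym2 (V × Bool) → ℝ) (hμ : IsWeight (BB Fbar) μ)
    (x y : V × Bool) (hx : x.1 ∈ S) (hy : y.1 ∈ T) :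
    percProb (BB Fbar) μ (fun K => ConnIn K x y) =
      percProb (bbSide Fbar S) μ (fun K => ConnIn K x (v, false)) *
          percProb (bbSideDel Fbar T v) μ (fun K => ConnIn K (v, false) y) +
        percProb (bbSide Fbar S) μ (fun K => ConnIn K x (v, true)) *
          percProb (bbSideDel Fbar T v) μ (fun K => ConnIn K (v, true) y) -
        percProb (bbSide Fbar S) μ
            (fun K => ConnIn K x (v, false) ∧ ConnIn K x (v, true)) *
          percProb (bbSideDel Fbar T v) μ
            (fun K => ConnIn K (v, false) y ∧ ConnIn K (v, true) y) := by
  set EG := edgeFin (bbSide Fbar S) with hEGdef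
  set EH := edgeFin (bbSideDel Fbar T v) with hEHdef
  have hdisj : Disjoint EG EH := edge_disjoint hST
  have key : ∀ K₁ ∈ EG.powerset, ∀ K₂ ∈ EH.powerset,
      (if ConnIn (K₁ ∪ K₂) x y then percWeight (BB Fbar) μ (K₁ ∪ K₂) else 0)
      = ((if ConnIn K₁ x (v, false) then percWeight (bbSide Fbar S) μ K₁ else 0) *
            (if ConnIn K₂ (v, false) y then percWeight (bbSideDel Fbar T v) μ K₂ else 0)
          + (if ConnIn K₁ x (v, true) then percWeight (bbSide Fbar S) μ K₁ else 0) *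
            (if ConnIn K₂ (v, true) y then percWeight (bbSideDel Fbar T v) μ K₂ else 0))
        - (if (ConnIn K₁ x (v, false) ∧ ConnIn K₁ x (v, true))
              then percWeight (bbSide Fbar S) μ K₁ else 0) *
            (if (ConnIn K₂ (v, false) y ∧ ConnIn K₂ (v, true) y)
              then percWeight (bbSideDel Fbar T v) μ K₂ else 0) := by
    intro K₁ h1 K₂ h2
    have hK₁ : K₁ ⊆ EG := Finset.mem_powerset.1 h1
    have hK₂ : K₂ ⊆ EH := Finset.mem_powerset.1 h2
    have hsub : K₁ ∪ K₂ ⊆ edgeFin (BB Fbar) := by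
      rw [edge_split hST hUnion hSep]
      exact Finset.union_subset_union hK₁ hK₂
    have hc := conn_split hST hUnion hSep (K₁ ∪ K₂) hsub hx hy
    have e1 : (K₁ ∪ K₂) ∩ EG = K₁ := by
      rw [Finset.union_inter_distrib_right, Finset.inter_eq_left.2 hK₁,
        Finset.disjoint_iff_inter_eq_empty.1 (hdisj.symm.mono_left hK₂), Finset.union_empty]
    have e2 : (K₁ ∪ K₂) ∩ EH = K₂ := by
      rw [Finset.union_inter_distrib_right, Finset.inter_eq_left.2 hK₂,
        Finset.disjoint_iff_inter_eq_empty.1 (hdisj.mono_left hK₁), Finset.empty_union]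
    rw [← hEGdef, ← hEHdef, e1, e2] at hc
    have hw := percWeight_factor hST hUnion hSep μ hK₁ hK₂
    by_cases p0 : ConnIn K₁ x (v, false) <;>
      by_cases p1 : ConnIn K₁ x (v, true) <;>
      by_cases q0 : ConnIn K₂ (v, false) y <;>
      by_cases q1 : ConnIn K₂ (v, true) y <;>
      simp only [hc, hw, Bool.exists_bool, p0, p1, q0, q1, if_true, if_false,
        true_and, false_and, and_true, and_false, or_true, or_false, true_or, false_or,
        and_self, or_self, if_pos, if_neg, not_false_iff] <;>
      simp <;> ring
  unfold percProb
  rw [show edgeFin (BB Fbar) = EG ∪ EH from edge_split hST hUnion hSep,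
    sum_powerset_union hdisj, Finset.sum_congr rfl
      (fun K₁ h1 => Finset.sum_congr rfl (fun K₂ h2 => key K₁ h1 K₂ h2))]
  simp only [Finset.sum_sub_distrib, Finset.sum_add_distrib]
  rw [← Finset.sum_mul_sum, ← Finset.sum_mul_sum, ← Finset.sum_mul_sum]
  congr!
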